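/- arXiv:1803.02509 — 3 statements merged into one kernel-verified Lean document; each statement's English description precedes it below -/
import Mathlib

section
/- (Theorem 2.1, part 1 — normal equation.) Let w be a symmetric n×n real matrix with nonnegative entries and zero diagonal, let Y be a skew-symmetric n×n real matrix, and define F(s) = ∑_{i,j} w_{ij} (s_j - s_i - Y_{ij})² for s : Fin n → ℝ. Then s minimizes F over all functions Fin n → ℝ if and only if s solves the normal equation Δ₀ s = -div Y, where Δ₀ is the weighted graph Laplacian and (div Y)(i) = ∑_j w_{ij} Y_{ij}. -/
open Matrix

/-- The weighted graph Laplacian `Δ₀` associated with a weight matrix `w`. -/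
def lap {n : ℕ} (w : Matrix (Fin n) (Fin n) ℝ) : Matrix (Fin n) (Fin n) ℝ :=
  Matrix.of fun i j => if i = j then ∑ k, w i k else -(w i j)

/-- The divergence of an edge flow `Y`: `(div Y) i = ∑_j w_{ij} Y_{ij}`. -/
def dvg {n : ℕ} (w Y : Matrix (Fin n) (Fin n) ℝ) : Fin n → ℝ :=
  fun i => ∑ j, w i j * Y i j

/-- The weighted least-squares ranking objective. -/
def F {n : ℕ} (w Y : Matrix (Fin n) (Fin n) ℝ) (s : Fin n → ℝ) : ℝ :=
  ∑ i, ∑ j, w i j * (s j - s i - Y i j) ^ 2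

theorem stmt7 {n : ℕ} (w Y : Matrix (Fin n) (Fin n) ℝ)
    (hwsymm : wᵀ = w) (hwnonneg : ∀ i j, 0 ≤ w i j)
    (hwdiag : ∀ i, w i i = 0) (hYskew : Yᵀ = -Y) (s : Fin n → ℝ) :
    (∀ t : Fin n → ℝ, F w Y s ≤ F w Y t) ↔
      (lap w).mulVec s = -(dvg w Y) := by
  have hw : ∀ i j, w j i = w i j := fun i j => congrFun (congrFun hwsymm i) j
  have hY : ∀ i j, Y j i = -Y i j := fun i j => congrFun (congrFun hYskew i) j
  set g : Fin n → ℝ := fun i => (lap w).mulVec s i + dvg w Y i with hgdef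
  -- pointwise formula for g
  have hg : ∀ i, g i = -∑ j, w i j * (s j - s i - Y i j) := by
    intro i
    have hlap : (lap w).mulVec s i
        = (∑ j, w i j) * s i - ∑ j, w i j * s j := by
      simp only [Matrix.mulVec, dotProduct, lap, Matrix.of_apply]
      have h0 : ∀ j : Fin n, (if i = j then ∑ k, w i k else -(w i j)) * s j
          = (if i = j then ((∑ k, w i k) + w i j) * s j else 0) + -(w i j * s j) := by
        intro j
        by_cases h : i = j
        · subst h; simp [hwdiag i]
        · simp [h]
      rw [Finset.sum_congr rfl (fun j _ => h0 j), Finset.sum_add_distrib,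
        Finset.sum_ite_eq Finset.univ i (fun j => ((∑ k, w i k) + w i j) * s j)]
      simp [hwdiag i, Finset.sum_neg_distrib]
      ring
    have expand : ∑ j, w i j * (s j - s i - Y i j)
        = (∑ j, w i j * s j) - (∑ j, w i j) * s i - ∑ j, w i j * Y i j := by
      simp only [mul_sub, Finset.sum_sub_distrib, ← Finset.sum_mul]
    simp only [hgdef, hlap, dvg, expand]
    ring
  -- key expansion
  have key : ∀ u : Fin n → ℝ,
      F w Y (fun i => s i + u i)
        = F w Y s + 4 * (∑ i, u i * g i) + ∑ i, ∑ j, w i j * (u j - u i) ^ 2 := by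
    intro u
    have hswap : ∑ i, ∑ j, w i j * ((s j - s i - Y i j) * u j)
        = ∑ i, ∑ j, -(w i j * ((s j - s i - Y i j) * u i)) := by
      rw [Finset.sum_comm]
      apply Finset.sum_congr rfl
      intro j _
      apply Finset.sum_congr rfl
      intro i _
      rw [hw i j, hY i j]
      ring
    have hcross : ∑ i, ∑ j, w i j * ((s j - s i - Y i j) * (u j - u i))
        = 2 * ∑ i, u i * g i := by
      have h1 : ∀ i j, w i j * ((s j - s i - Y i j) * (u j - u i))
          = w i j * ((s j - s i - Y i j) * u j) - w i j * ((s j - s i - Y i j) * u i) := by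
        intro i j; ring
      calc ∑ i, ∑ j, w i j * ((s j - s i - Y i j) * (u j - u i))
          = (∑ i, ∑ j, w i j * ((s j - s i - Y i j) * u j))
            - ∑ i, ∑ j, w i j * ((s j - s i - Y i j) * u i) := by
            simp only [h1, Finset.sum_sub_distrib]
        _ = -2 * ∑ i, ∑ j, w i j * ((s j - s i - Y i j) * u i) := by
            rw [hswap]; simp [Finset.sum_neg_distrib]; ring
        _ = 2 * ∑ i, u i * g i := by
            rw [Finset.mul_sum, Finset.mul_sum]
            apply Finset.sum_congr rfl
            intro i _
            rw [hg i, show (2:ℝ) * (u i * -∑ j, w i j * (s j - s i - Y i j))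
                = (-(2 * u i)) * ∑ j, w i j * (s j - s i - Y i j) from by ring,
              Finset.mul_sum, Finset.mul_sum]
            apply Finset.sum_congr rfl
            intro j _
            ring
    have hpt : ∀ i j : Fin n,
        w i j * ((s j + u j) - (s i + u i) - Y i j) ^ 2
          = w i j * (s j - s i - Y i j) ^ 2
            + 2 * (w i j * ((s j - s i - Y i j) * (u j - u i)))
            + w i j * (u j - u i) ^ 2 := by
      intro i j; ring
    unfold F
    simp only [hpt, Finset.sum_add_distrib, ← Finset.mul_sum]
    rw [hcross]
    ring
  constructor
  · intro hmin
    -- show g = 0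
    have hG0 : ∀ i, g i = 0 := by
      by_contra hne
      push_neg at hne
      set G : ℝ := ∑ i, (g i) ^ 2 with hGdef
      set Q : ℝ := ∑ i, ∑ j, w i j * (g j - g i) ^ 2 with hQdef
      have hGpos : 0 < G := by
        obtain ⟨i0, hi0⟩ := hne
        have : 0 < (g i0) ^ 2 := by positivity
        exact lt_of_lt_of_le this
          (Finset.single_le_sum (fun i _ => sq_nonneg (g i)) (Finset.mem_univ i0))
      have hQnn : 0 ≤ Q := by
        apply Finset.sum_nonneg; intro i _
        apply Finset.sum_nonneg; intro j _
        exact mul_nonneg (hwnonneg i j) (sq_nonneg _)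
      set ε : ℝ := G / (Q + 1) with hεdef
      have hεpos : 0 < ε := div_pos hGpos (by linarith)
      have hεQ : ε * Q ≤ G := by
        rw [hεdef, div_mul_eq_mul_div, div_le_iff₀ (by linarith : (0:ℝ) < Q + 1)]
        nlinarith
      have hkey := key (fun i => -ε * g i)
      have hsum : (∑ i, (-ε * g i) * g i) = -ε * G := by
        rw [hGdef, Finset.mul_sum]
        apply Finset.sum_congr rfl
        intro i _; ring
      have hQu : (∑ i, ∑ j, w i j * ((-ε * g j) - (-ε * g i)) ^ 2) = ε ^ 2 * Q := by
        rw [hQdef, Finset.mul_sum]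
        apply Finset.sum_congr rfl
        intro i _
        rw [Finset.mul_sum]
        apply Finset.sum_congr rfl
        intro j _; ring
      rw [hsum, hQu] at hkey
      have hle := hmin (fun i => s i + (-ε * g i))
      rw [hkey] at hle
      -- F s ≤ F s - 4 ε G + ε² Q, but ε² Q = ε (εQ) ≤ ε G < 4 ε G
      nlinarith [mul_le_mul_of_nonneg_left hεQ (le_of_lt hεpos), mul_pos hεpos hGpos]
    funext i
    have := hG0 i
    simp only [hgdef] at this
    simp only [Pi.neg_apply]
    linarith
  · intro heq t
    have hg0 : ∀ i, g i = 0 := by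
      intro i
      simp only [hgdef, heq, Pi.neg_apply]
      ring
    have hkey := key (fun i => t i - s i)
    have h1 : (fun i => s i + (t i - s i)) = t := by funext i; ring
    rw [h1] at hkey
    have h2 : (∑ i, (t i - s i) * g i) = 0 := by
      apply Finset.sum_eq_zero
      intro i _; rw [hg0 i]; ring
    rw [h2] at hkey
    have h3 : 0 ≤ ∑ i, ∑ j, w i j * ((t j - s j) - (t i - s i)) ^ 2 := by
      apply Finset.sum_nonneg; intro i _
      apply Finset.sum_nonneg; intro j _
      exact mul_nonneg (hwnonneg i j) (sq_nonneg _)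
    linarith [hkey.ge, hkey.le]
end

section
/- (Theorem 2.1, part 2 — minimum-norm solution.) Let w be a symmetric n×n real matrix with nonnegative entries and zero diagonal, let Y be a skew-symmetric n×n real matrix, and define F(s) = ∑_{i,j} w_{ij} (s_j - s_i - Y_{ij})². Then among all minimizers of F there is a unique one, s*, of minimal Euclidean norm, and s* is characterized by the two conditions: Δ₀ s* = -div Y, and s* is orthogonal (in the standard Euclidean inner product on Fin n → ℝ) to the kernel of Δ₀. -/
/-! Summation by parts, `∑ᵢⱼ wᵢⱼ Zᵢⱼ (uⱼ - uᵢ) = -2 ⟨div Z, u⟩` for skew `Z`, gives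
`F (s + u) = F s + 4 ⟨Δ₀ s + div Y, u⟩ + 2 ⟨Δ₀ u, u⟩` with `Δ₀` positive semidefinite,
so the minimizers of `F` are exactly the solutions of the normal equation
`Δ₀ s = -div Y`. Every `v ∈ ker Δ₀` is constant along the edges (`wᵢⱼ (vⱼ - vᵢ) = 0`),
so summation by parts also shows `div Y ⊥ ker Δ₀ = (range Δ₀)ᗮ`: the normal equation
is solvable, and its solution set is `p + ker Δ₀` for a unique solution `p ⊥ ker Δ₀`,
which by Pythagoras is the unique one of least norm. -/
open Matrix

/-- `s` is a minimizer of the objective `F`. -/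
def IsMinimizer {n : ℕ} (w Y : Matrix (Fin n) (Fin n) ℝ) (s : Fin n → ℝ) : Prop :=
  ∀ t : Fin n → ℝ, F w Y s ≤ F w Y t

lemma nonpos_of_forall_pos_le_mul {a b : ℝ} (h : ∀ ε > 0, a ≤ b * ε) : a ≤ 0 := by
  by_contra! ha
  have hε : 0 < a / (2 * (|b| + 1)) := by positivity
  have hle := h _ hε
  have habs : b * (a / (2 * (|b| + 1))) ≤ |b| * (a / (2 * (|b| + 1))) :=
    mul_le_mul_of_nonneg_right (le_abs_self b) hε.le
  have hlt : |b| * (a / (2 * (|b| + 1))) < a := by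
    rw [mul_div_assoc', div_lt_iff₀ (by positivity)]; nlinarith [abs_nonneg b]
  linarith

theorem Matrix.IsSymm.exists_mulVec_eq_of_dotProduct_ker {ι : Type*} [Fintype ι]
    [DecidableEq ι] {A : Matrix ι ι ℝ} (hA : A.IsSymm) {b : ι → ℝ}
    (hb : ∀ v, A *ᵥ v = 0 → b ⬝ᵥ v = 0) :
    ∃ p, A *ᵥ p = b ∧ ∀ v, A *ᵥ v = 0 → p ⬝ᵥ v = 0 := by
  set T := A.toEuclideanLin
  have hT : T.IsSymmetric := isSymmetric_toEuclideanLin_iff.mpr (isHermitian_iff_isSymm.mpr hA)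
  have mem_orthogonal_ker (x : ι → ℝ) :
      WithLp.toLp 2 x ∈ (LinearMap.ker T)ᗮ ↔ ∀ v, A *ᵥ v = 0 → x ⬝ᵥ v = 0 := by
    simp only [Submodule.mem_orthogonal, LinearMap.mem_ker,
      EuclideanSpace.inner_eq_star_dotProduct]
    exact ⟨fun h v hv => h (WithLp.toLp 2 v) (congrArg (WithLp.toLp 2) hv),
      fun h u hu => h u.ofLp (congrArg WithLp.ofLp hu)⟩
  obtain ⟨x, hx⟩ : WithLp.toLp 2 b ∈ LinearMap.range T := by
    rwa [← Submodule.orthogonal_orthogonal (LinearMap.range T), hT.orthogonal_range,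
      mem_orthogonal_ker]
  obtain ⟨k, hk, p, hp, rfl⟩ := (LinearMap.ker T).exists_add_mem_mem_orthogonal x
  rw [map_add, LinearMap.mem_ker.mp hk, zero_add] at hx
  exact ⟨p.ofLp, congrArg WithLp.ofLp hx, (mem_orthogonal_ker _).1 hp⟩

section MinimumNorm

variable {m ι R : Type*} [Fintype ι] [CommRing R] [LinearOrder R] [IsStrictOrderedRing R]
  {A : Matrix m ι R} {p t : ι → R}

lemma dotProduct_self_eq_add_of_mulVec_eq (hp : ∀ v, A *ᵥ v = 0 → p ⬝ᵥ v = 0)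
    (ht : A *ᵥ t = A *ᵥ p) : t ⬝ᵥ t = p ⬝ᵥ p + (t - p) ⬝ᵥ (t - p) := by
  have h := hp (t - p) (by rw [mulVec_sub, ht, sub_self])
  simp only [sub_dotProduct, dotProduct_sub] at h ⊢
  rw [dotProduct_comm t p]
  linarith

lemma dotProduct_self_le_of_mulVec_eq (hp : ∀ v, A *ᵥ v = 0 → p ⬝ᵥ v = 0)
    (ht : A *ᵥ t = A *ᵥ p) : p ⬝ᵥ p ≤ t ⬝ᵥ t := by
  rw [dotProduct_self_eq_add_of_mulVec_eq hp ht, le_add_iff_nonneg_right]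
  exact Finset.sum_nonneg fun i _ => mul_self_nonneg _

lemma eq_of_mulVec_eq_of_dotProduct_self_le (hp : ∀ v, A *ᵥ v = 0 → p ⬝ᵥ v = 0)
    (ht : A *ᵥ t = A *ᵥ p) (hle : t ⬝ᵥ t ≤ p ⬝ᵥ p) : t = p := by
  rw [dotProduct_self_eq_add_of_mulVec_eq hp ht, add_le_iff_nonpos_right] at hle
  exact sub_eq_zero.1 <| dotProduct_self_eq_zero.1 <|
    le_antisymm hle (Finset.sum_nonneg fun i _ => mul_self_nonneg _)

lemma eq_of_mulVec_eq_of_dotProduct_ker (hp : ∀ v, A *ᵥ v = 0 → p ⬝ᵥ v = 0)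
    (ht : ∀ v, A *ᵥ v = 0 → t ⬝ᵥ v = 0) (h : A *ᵥ t = A *ᵥ p) : t = p := by
  have hker : A *ᵥ (t - p) = 0 := by rw [mulVec_sub, h, sub_self]
  refine sub_eq_zero.1 (dotProduct_self_eq_zero.1 ?_)
  rw [sub_dotProduct, ht _ hker, hp _ hker, sub_zero]

end MinimumNorm

def grad {n : ℕ} (s : Fin n → ℝ) : Matrix (Fin n) (Fin n) ℝ :=
  Matrix.of fun i j => s j - s i

section Laplacian

variable {n : ℕ} {w : Matrix (Fin n) (Fin n) ℝ}

lemma lap_isSymm (hw : wᵀ = w) : (lap w).IsSymm := by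
  refine Matrix.IsSymm.ext fun i j => ?_
  by_cases hij : i = j
  · rw [hij]
  · simp [lap, hij, Ne.symm hij, ← congrFun (congrFun hw i) j]

lemma lap_eq_diagonal_sub (hdiag : ∀ i, w i i = 0) :
    lap w = diagonal (fun i => ∑ k, w i k) - w := by
  ext i j
  by_cases hij : i = j
  · subst hij; simp [lap, hdiag]
  · simp [lap, hij]

lemma dvg_sub (Z Y : Matrix (Fin n) (Fin n) ℝ) : dvg w (Z - Y) = dvg w Z - dvg w Y := by
  ext i; simp [dvg, mul_sub, Finset.sum_sub_distrib]

lemma grad_transpose (s : Fin n → ℝ) : (grad s)ᵀ = -grad s := by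
  ext i j; simp [grad]

lemma dvg_grad (hdiag : ∀ i, w i i = 0) (s : Fin n → ℝ) :
    dvg w (grad s) = -(lap w *ᵥ s) := by
  ext i
  rw [lap_eq_diagonal_sub hdiag, sub_mulVec, Pi.neg_apply, Pi.sub_apply, mulVec_diagonal]
  simp [dvg, grad, mulVec, dotProduct, mul_sub, Finset.sum_mul]

lemma sum_mul_mul_sub_eq (hw : wᵀ = w) {Z : Matrix (Fin n) (Fin n) ℝ} (hZ : Zᵀ = -Z)
    (u : Fin n → ℝ) :
    ∑ i, ∑ j, w i j * Z i j * (u j - u i) = -2 * (dvg w Z ⬝ᵥ u) := by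
  have hw' i j : w j i = w i j := congrFun (congrFun hw i) j
  have hZ' i j : Z j i = -Z i j := by simpa using congrFun (congrFun hZ i) j
  have head : ∑ i, ∑ j, w i j * Z i j * u j = -(dvg w Z ⬝ᵥ u) := by
    rw [Finset.sum_comm]
    simp only [dvg, dotProduct, Finset.sum_mul, ← Finset.sum_neg_distrib]
    refine Finset.sum_congr rfl fun i _ => Finset.sum_congr rfl fun j _ => ?_
    rw [hw', hZ']; ring
  have tail : ∑ i, ∑ j, w i j * Z i j * u i = dvg w Z ⬝ᵥ u := by
    simp only [dvg, dotProduct, Finset.sum_mul]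
  simp only [mul_sub, Finset.sum_sub_distrib, head, tail]
  ring

lemma sum_mul_sub_sq_eq (hw : wᵀ = w) (hdiag : ∀ i, w i i = 0) (u : Fin n → ℝ) :
    ∑ i, ∑ j, w i j * (u j - u i) ^ 2 = 2 * (lap w *ᵥ u ⬝ᵥ u) := by
  have h := sum_mul_mul_sub_eq hw (grad_transpose u) u
  rw [dvg_grad hdiag, neg_dotProduct] at h
  simpa [grad, sq, mul_assoc] using h

lemma lap_mulVec_dotProduct_self_nonneg (hw : wᵀ = w) (hnonneg : ∀ i j, 0 ≤ w i j)
    (hdiag : ∀ i, w i i = 0) (u : Fin n → ℝ) : 0 ≤ lap w *ᵥ u ⬝ᵥ u := by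
  have h : 0 ≤ ∑ i, ∑ j, w i j * (u j - u i) ^ 2 :=
    Finset.sum_nonneg fun i _ => Finset.sum_nonneg fun j _ =>
      mul_nonneg (hnonneg i j) (sq_nonneg _)
  rw [sum_mul_sub_sq_eq hw hdiag] at h
  linarith

lemma mul_sub_eq_zero_of_lap_mulVec_eq_zero (hw : wᵀ = w) (hnonneg : ∀ i j, 0 ≤ w i j)
    (hdiag : ∀ i, w i i = 0) {v : Fin n → ℝ} (hv : lap w *ᵥ v = 0) (i j : Fin n) :
    w i j * (v j - v i) = 0 := by
  have hterm (i j : Fin n) : 0 ≤ w i j * (v j - v i) ^ 2 :=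
    mul_nonneg (hnonneg i j) (sq_nonneg _)
  have hsum : ∑ i, ∑ j, w i j * (v j - v i) ^ 2 = 0 := by
    rw [sum_mul_sub_sq_eq hw hdiag, hv, zero_dotProduct, mul_zero]
  rw [Fintype.sum_eq_zero_iff_of_nonneg fun i => Finset.sum_nonneg fun j _ => hterm i j] at hsum
  have hij := congrFun ((Fintype.sum_eq_zero_iff_of_nonneg (hterm i)).1 (congrFun hsum i)) j
  rcases mul_eq_zero.1 hij with hw0 | hv0
  · rw [hw0, zero_mul]
  · rw [pow_eq_zero_iff two_ne_zero |>.1 hv0, mul_zero]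

variable {Y : Matrix (Fin n) (Fin n) ℝ}

lemma dvg_dotProduct_eq_zero_of_lap_mulVec_eq_zero (hw : wᵀ = w) (hnonneg : ∀ i j, 0 ≤ w i j)
    (hdiag : ∀ i, w i i = 0) (hY : Yᵀ = -Y) {v : Fin n → ℝ} (hv : lap w *ᵥ v = 0) :
    dvg w Y ⬝ᵥ v = 0 := by
  have h := sum_mul_mul_sub_eq hw hY v
  rw [Finset.sum_eq_zero fun i _ => Finset.sum_eq_zero fun j _ => by
    rw [mul_right_comm, mul_sub_eq_zero_of_lap_mulVec_eq_zero hw hnonneg hdiag hv,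
      zero_mul]] at h
  linarith

lemma F_add (hw : wᵀ = w) (hdiag : ∀ i, w i i = 0) (hY : Yᵀ = -Y) (s u : Fin n → ℝ) :
    F w Y (s + u) = F w Y s + 4 * ((lap w *ᵥ s + dvg w Y) ⬝ᵥ u) + 2 * (lap w *ᵥ u ⬝ᵥ u) := by
  have hskew : (grad s - Y)ᵀ = -(grad s - Y) := by
    rw [transpose_sub, grad_transpose, hY]; abel
  have cross := sum_mul_mul_sub_eq hw hskew u
  rw [dvg_sub, dvg_grad hdiag] at cross
  have expand : F w Y (s + u) = F w Y s
      + 2 * ∑ i, ∑ j, w i j * (grad s - Y) i j * (u j - u i)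
      + ∑ i, ∑ j, w i j * (u j - u i) ^ 2 := by
    simp only [F, grad, Finset.mul_sum, ← Finset.sum_add_distrib]
    refine Finset.sum_congr rfl fun i _ => Finset.sum_congr rfl fun j _ => ?_
    simp only [Pi.add_apply, Matrix.sub_apply, of_apply]
    ring
  rw [expand, cross, sum_mul_sub_sq_eq hw hdiag]
  simp only [sub_dotProduct, neg_dotProduct, add_dotProduct]
  ring

theorem isMinimizer_iff (hw : wᵀ = w) (hnonneg : ∀ i j, 0 ≤ w i j) (hdiag : ∀ i, w i i = 0)
    (hY : Yᵀ = -Y) (s : Fin n → ℝ) :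
    IsMinimizer w Y s ↔ lap w *ᵥ s = -dvg w Y := by
  rw [← add_eq_zero_iff_eq_neg]
  set g := lap w *ᵥ s + dvg w Y with hg
  constructor
  · intro hmin
    have hdescent (ε : ℝ) (hε : 0 < ε) : 2 * (g ⬝ᵥ g) ≤ (lap w *ᵥ g ⬝ᵥ g) * ε := by
      have h := hmin (s + (-ε) • g)
      rw [F_add hw hdiag hY, ← hg] at h
      simp only [mulVec_smul, smul_dotProduct, dotProduct_smul, smul_eq_mul] at h
      nlinarith
    have := nonpos_of_forall_pos_le_mul hdescent
    exact dotProduct_self_eq_zero.1 (le_antisymm (by linarith)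
      (Finset.sum_nonneg fun i _ => mul_self_nonneg (g i)))
  · intro hg0 t
    have h := F_add hw hdiag hY s (t - s)
    rw [← hg, hg0, zero_dotProduct, add_sub_cancel] at h
    linarith [lap_mulVec_dotProduct_self_nonneg hw hnonneg hdiag (t - s)]

end Laplacian

theorem stmt8 {n : ℕ} (w Y : Matrix (Fin n) (Fin n) ℝ)
    (hwsymm : wᵀ = w) (hwnonneg : ∀ i j, 0 ≤ w i j)
    (hwdiag : ∀ i, w i i = 0) (hYskew : Yᵀ = -Y) :
    ∃ sstar : Fin n → ℝ,
      -- `sstar` is a minimizer of `F` of minimal Euclidean norm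
      (IsMinimizer w Y sstar ∧
        ∀ t : Fin n → ℝ, IsMinimizer w Y t →
          ∑ i, (sstar i) ^ 2 ≤ ∑ i, (t i) ^ 2) ∧
      -- it is the unique such minimum-norm minimizer
      (∀ t : Fin n → ℝ,
        (IsMinimizer w Y t ∧
          ∀ u : Fin n → ℝ, IsMinimizer w Y u →
            ∑ i, (t i) ^ 2 ≤ ∑ i, (u i) ^ 2) → t = sstar) ∧
      -- and it is characterized by the normal equation together with
      -- orthogonality to the kernel of the Laplacian
      (∀ s : Fin n → ℝ,
        s = sstar ↔
          ((lap w).mulVec s = -(dvg w Y) ∧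
            ∀ v : Fin n → ℝ, (lap w).mulVec v = 0 → ∑ i, s i * v i = 0)) := by
  have hmin := isMinimizer_iff hwsymm hwnonneg hwdiag hYskew
  obtain ⟨p, hp, hpker⟩ := (lap_isSymm hwsymm).exists_mulVec_eq_of_dotProduct_ker fun v hv => by
    rw [neg_dotProduct,
      dvg_dotProduct_eq_zero_of_lap_mulVec_eq_zero hwsymm hwnonneg hwdiag hYskew hv, neg_zero]
  have hsol {t : Fin n → ℝ} (ht : IsMinimizer w Y t) : lap w *ᵥ t = lap w *ᵥ p :=
    ((hmin t).1 ht).trans hp.symm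
  have hpmin : IsMinimizer w Y p := (hmin p).2 hp
  -- turns each `∑ i, x i ^ 2` into `∑ i, x i * x i`, which is `x ⬝ᵥ x` by definition
  simp only [sq]
  refine ⟨p, ⟨hpmin, fun t ht => dotProduct_self_le_of_mulVec_eq hpker (hsol ht)⟩, ?_,
    fun s => ⟨?_, ?_⟩⟩
  · rintro t ⟨ht, hle⟩
    exact eq_of_mulVec_eq_of_dotProduct_self_le hpker (hsol ht) (hle p hpmin)
  · rintro rfl
    exact ⟨hp, hpker⟩
  · rintro ⟨hs, hsker⟩
    exact eq_of_mulVec_eq_of_dotProduct_ker hpker hsker (hs.trans hp.symm)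
end

section
/- Let w be a symmetric n×n real matrix with nonnegative entries and zero diagonal such that the graph with edges {(i,j) : w_{ij} > 0} is connected, and let Y be a skew-symmetric n×n real matrix. Then the normal equation Δ₀ s = -div Y has a solution s : Fin n → ℝ; i.e., -div Y lies in the range of the weighted graph Laplacian Δ₀. -/
open Matrix

/-- The comparison graph of `w` is connected: any two vertices are joined by a
path of edges `{(i,j) : w i j > 0}`. -/
def IsConn {n : ℕ} (w : Matrix (Fin n) (Fin n) ℝ) : Prop :=
  ∀ i j : Fin n, Relation.ReflTransGen (fun a b => 0 < w a b) i j

/-! `Δ₀` is symmetric, so its range is the orthogonal complement of its kernel. The identity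
`∑ᵢⱼ wᵢⱼ (uᵢ - uⱼ)² = 2 ⟪u, Δ₀ u⟫` shows that a vector in the kernel is constant across every edge,
hence constant on the connected comparison graph. And `-div Y` is orthogonal to the constants: the
entries `wᵢⱼ Yᵢⱼ` are skew-symmetric, so the divergence sums to zero. -/

theorem Matrix.IsHermitian.exists_mulVec_eq {ι 𝕜 : Type*} [Fintype ι] [DecidableEq ι]
    [RCLike 𝕜] {A : Matrix ι ι 𝕜} (hA : A.IsHermitian) {v : ι → 𝕜}
    (hv : ∀ u, A *ᵥ u = 0 → star u ⬝ᵥ v = 0) : ∃ s, A *ᵥ s = v := by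
  set T := toEuclideanLin A
  have hT : T.IsSymmetric := isSymmetric_toEuclideanLin_iff.mpr hA
  have hv' : WithLp.toLp 2 v ∈ LinearMap.range T := by
    rw [← (LinearMap.range T).orthogonal_orthogonal, hT.orthogonal_range,
      Submodule.mem_orthogonal]
    intro u hu
    rw [EuclideanSpace.inner_eq_star_dotProduct, dotProduct_comm]
    exact hv _ (congrArg WithLp.ofLp hu)
  obtain ⟨s, hs⟩ := hv'
  exact ⟨WithLp.ofLp s, congrArg WithLp.ofLp hs⟩

theorem Finset.sum_sum_eq_zero_of_antisymm {ι M : Type*} [Fintype ι] [AddCommGroup M]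
    [IsAddTorsionFree M] (f : ι → ι → M) (hf : ∀ i j, f j i = -f i j) :
    ∑ i, ∑ j, f i j = 0 :=
  self_eq_neg.mp <| calc
    ∑ i, ∑ j, f i j = ∑ i, ∑ j, f j i := Finset.sum_comm
    _ = ∑ i, ∑ j, -f i j :=
      Finset.sum_congr rfl fun i _ => Finset.sum_congr rfl fun j _ => hf i j
    _ = -∑ i, ∑ j, f i j := by simp only [Finset.sum_neg_distrib]

theorem dotProduct_eq_zero_of_forall_eq {ι R : Type*} [Fintype ι] [NonUnitalNonAssocSemiring R]
    {u v : ι → R} (hu : ∀ i j, u i = u j) (hv : ∑ i, v i = 0) : u ⬝ᵥ v = 0 := by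
  rcases isEmpty_or_nonempty ι with hι | ⟨⟨i₀⟩⟩
  · simp [dotProduct]
  · calc u ⬝ᵥ v = ∑ i, u i₀ * v i := Finset.sum_congr rfl fun i _ => by rw [hu i i₀]
      _ = 0 := by rw [← Finset.mul_sum, hv, mul_zero]

section Laplacian

variable {n : ℕ} {w : Matrix (Fin n) (Fin n) ℝ}

theorem lap_isHermitian (hw : w.IsSymm) : (lap w).IsHermitian := by
  refine isHermitian_iff_isSymm.mpr <| IsSymm.ext fun i j => ?_
  by_cases hij : i = j
  · rw [hij]
  · simp only [lap, of_apply, hij, Ne.symm hij, if_false, hw.apply]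

theorem lap_mulVec_apply (hdiag : ∀ i, w i i = 0) (u : Fin n → ℝ) (i : Fin n) :
    (lap w *ᵥ u) i = ∑ j, w i j * (u i - u j) := by
  have hlap : ∀ j, lap w i j = (if i = j then ∑ k, w i k else 0) - w i j := by
    intro j
    by_cases hij : i = j
    · subst hij; simp [lap, hdiag]
    · simp [lap, hij]
  simp only [mulVec, dotProduct, hlap, sub_mul, ite_mul, zero_mul, Finset.sum_sub_distrib,
    Finset.sum_ite_eq, Finset.mem_univ, if_true, mul_sub, Finset.sum_mul]

theorem sum_sum_mul_sub_sq_eq_two_mul_dotProduct_lap_mulVec (hw : w.IsSymm)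
    (hdiag : ∀ i, w i i = 0) (u : Fin n → ℝ) :
    ∑ i, ∑ j, w i j * (u i - u j) ^ 2 = 2 * (u ⬝ᵥ lap w *ᵥ u) := by
  have hsymm := Finset.sum_sum_eq_zero_of_antisymm
    (fun i j => w i j * (u i - u j) ^ 2 - 2 * (u i * (w i j * (u i - u j))))
    fun i j => by rw [hw.apply i j]; ring
  simp only [dotProduct, lap_mulVec_apply hdiag, Finset.mul_sum, Finset.sum_sub_distrib]
    at hsymm ⊢
  linarith

theorem eq_of_lap_mulVec_eq_zero_of_pos (hw : w.IsSymm) (hnonneg : ∀ i j, 0 ≤ w i j)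
    (hdiag : ∀ i, w i i = 0) {u : Fin n → ℝ} (hu : lap w *ᵥ u = 0) {i j : Fin n}
    (hij : 0 < w i j) : u i = u j := by
  have hterm : ∀ i j, 0 ≤ w i j * (u i - u j) ^ 2 := fun i j =>
    mul_nonneg (hnonneg i j) (sq_nonneg _)
  have henergy : ∑ i, ∑ j, w i j * (u i - u j) ^ 2 = 0 := by
    rw [sum_sum_mul_sub_sq_eq_two_mul_dotProduct_lap_mulVec hw hdiag, hu, dotProduct_zero,
      mul_zero]
  have hrow := (Fintype.sum_eq_zero_iff_of_nonneg fun i =>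
    Finset.sum_nonneg fun j _ => hterm i j).mp henergy
  have hedge : w i j * (u i - u j) ^ 2 = 0 :=
    congrFun ((Fintype.sum_eq_zero_iff_of_nonneg (hterm i)).mp (congrFun hrow i)) j
  rw [mul_eq_zero, sq_eq_zero_iff, sub_eq_zero] at hedge
  exact hedge.resolve_left hij.ne'

theorem IsConn.eq_of_lap_mulVec_eq_zero (hconn : IsConn w) (hw : w.IsSymm)
    (hnonneg : ∀ i j, 0 ≤ w i j) (hdiag : ∀ i, w i i = 0) {u : Fin n → ℝ}
    (hu : lap w *ᵥ u = 0) (i j : Fin n) : u i = u j := by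
  induction hconn i j with
  | refl => rfl
  | tail _ hedge ih => exact ih.trans (eq_of_lap_mulVec_eq_zero_of_pos hw hnonneg hdiag hu hedge)

theorem sum_dvg_eq_zero {Y : Matrix (Fin n) (Fin n) ℝ} (hw : w.IsSymm) (hY : Yᵀ = -Y) :
    ∑ i, dvg w Y i = 0 :=
  Finset.sum_sum_eq_zero_of_antisymm (fun i j => w i j * Y i j) fun i j => by
    rw [hw.apply, show Y j i = -Y i j from congrFun (congrFun hY i) j, mul_neg]

end Laplacian

theorem stmt16 {n : ℕ} (w Y : Matrix (Fin n) (Fin n) ℝ)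
    (hwsymm : wᵀ = w) (hwnonneg : ∀ i j, 0 ≤ w i j)
    (hwdiag : ∀ i, w i i = 0) (hconn : IsConn w) (hYskew : Yᵀ = -Y) :
    ∃ s : Fin n → ℝ, (lap w).mulVec s = -(dvg w Y) :=
  (lap_isHermitian hwsymm).exists_mulVec_eq fun u hu => by
    rw [star_trivial]
    have hconst := hconn.eq_of_lap_mulVec_eq_zero hwsymm hwnonneg hwdiag hu
    refine dotProduct_eq_zero_of_forall_eq hconst ?_
    simp only [Pi.neg_apply, Finset.sum_neg_distrib, sum_dvg_eq_zero hwsymm hYskew, neg_zero]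
end
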